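/- Let R• be a ℤ_{≤0}-graded cochain complex of vector spaces with differential d₀ such that Hⁱ(R•) = 0 for all i ≠ 0. Let d_ℏ = d₀ + ℏd₁ + ... + ℏⁿdₙ be an ℏ-linear degree +1 map on R•⊗ℂ[ℏ] with d_ℏ² = 0. Then for each k, the natural map H⁰(ℏ^{k+1} R•_ℏ, d_ℏ) → H⁰(ℏ^k R•_ℏ, d_ℏ) is injective with cokernel isomorphic to ℏ^k H⁰(R•, d₀), and Hᵏ(R•_ℏ, d_ℏ) has trivial associated graded in negative degrees. -/

import Mathlib

/-! The coefficient of `ℏᵏ` in `d_ℏ p`, for `p ∈ ℏᵏR_ℏ`, is `d₀ (p k)`. So a `d_ℏ`-cocycle or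
`d_ℏ`-coboundary in `ℏᵏR_ℏ` has a `d₀`-cocycle as its leading coefficient, and exactness of
`d₀` in negative degrees writes that coefficient as `d₀ y`; subtracting `d_ℏ (ℏᵏ y)` then pushes
the element into `ℏ^{k+1}R_ℏ` without changing its class. -/

noncomputable section

variable (M : ℕ → Type) [∀ n, AddCommGroup (M n)] [∀ n, Module ℂ (M n)]
variable (N : ℕ) (D : ℕ → ∀ n : ℕ, M (n + 1) →ₗ[ℂ] M n)

/-- The total differential `d_ℏ = Σ_{j≤N} ℏʲ dⱼ` on polynomials in `ℏ`:
`(d_ℏ p)_k = Σ_j dⱼ (p_{k-j})`. -/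
def dh (n : ℕ) : (ℕ →₀ M (n + 1)) →ₗ[ℂ] (ℕ →₀ M n) :=
  Finsupp.lsum ℂ (fun k =>
    ∑ j ∈ Finset.range (N + 1), (Finsupp.lsingle (k + j)) ∘ₗ (D j n))

section

variable {M N D}

open Finset Finsupp

lemma dh_single (n a : ℕ) (y : M (n + 1)) :
    dh M N D n (single a y) = ∑ j ∈ range (N + 1), single (a + j) (D j n y) := by
  simp [dh]

lemma dh_apply (n : ℕ) (p : ℕ →₀ M (n + 1)) (m : ℕ) :
    dh M N D n p m = ∑ j ∈ range (N + 1), if j ≤ m then D j n (p (m - j)) else 0 := by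
  induction p using Finsupp.induction_linear with
  | zero => simp
  | add p q hp hq =>
    rw [map_add, Finsupp.add_apply, hp, hq, ← sum_add_distrib]
    refine sum_congr rfl fun j _ => ?_
    split_ifs <;> simp
  | single a y =>
    rw [dh_single, finsetSum_apply]
    refine sum_congr rfl fun j _ => ?_
    simp only [single_apply]
    split_ifs <;> first | rfl | (exfalso; omega) | simp

lemma dh_apply_eq_sum_range (hfin : ∀ j, N < j → ∀ n, D j n = 0)
    (n : ℕ) (p : ℕ →₀ M (n + 1)) (m : ℕ) :
    dh M N D n p m = ∑ j ∈ range (m + 1), D j n (p (m - j)) := by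
  rw [dh_apply, ← sum_filter]
  refine sum_subset (fun j => by simp) fun j hj hj' => ?_
  simp only [mem_filter, mem_range] at hj hj'
  rw [hfin j (by omega), LinearMap.zero_apply]

lemma dh_apply_of_lt {n k : ℕ} {p : ℕ →₀ M (n + 1)} (hp : ∀ j < k, p j = 0)
    {m : ℕ} (hm : m < k) : dh M N D n p m = 0 := by
  rw [dh_apply]
  refine sum_eq_zero fun j _ => ?_
  split_ifs
  · rw [hp _ (by omega), map_zero]
  · rfl

lemma dh_apply_self {n k : ℕ} {p : ℕ →₀ M (n + 1)} (hp : ∀ j < k, p j = 0) :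
    dh M N D n p k = D 0 n (p k) := by
  rw [dh_apply, sum_eq_single_of_mem 0 (by simp)]
  · simp
  · intro j _ hj
    split_ifs
    · rw [hp _ (by omega), map_zero]
    · rfl

lemma single_apply_of_lt {X : Type*} [Zero X] (x : X) {j k : ℕ} (hj : j < k) :
    single k x j = 0 :=
  single_eq_of_ne (by omega)

lemma dh_dh (hfin : ∀ j, N < j → ∀ n, D j n = 0)
    (hsq : ∀ k n, ∑ i ∈ range (k + 1), D i n ∘ₗ D (k - i) (n + 1) = 0)
    (n : ℕ) (q : ℕ →₀ M (n + 2)) : dh M N D n (dh M N D (n + 1) q) = 0 := by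
  ext m
  have hreindex : ∀ j ∈ range (m + 1),
      D j n (dh M N D (n + 1) q (m - j)) =
        ∑ i ∈ range (m + 1 - j), D j n (D i (n + 1) (q (m - j - i))) := by
    intro j hj
    rw [dh_apply_eq_sum_range hfin, map_sum,
      Nat.sub_add_comm (by simpa [Nat.lt_succ_iff] using hj)]
  -- regroup by total `ℏ`-degree `s = i + j`: each group is the `ℏˢ`-component of `d_ℏ²`
  rw [dh_apply_eq_sum_range hfin, sum_congr rfl hreindex, ← sum_range_diag_flip]
  refine sum_eq_zero fun s hs => ?_
  have hdiag : ∀ j ∈ range (s + 1), D j n (D (s - j) (n + 1) (q (m - j - (s - j)))) =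
      (D j n ∘ₗ D (s - j) (n + 1)) (q (m - s)) := by
    intro j hj
    simp only [mem_range] at hj
    rw [LinearMap.comp_apply, show m - j - (s - j) = m - s by omega]
  rw [sum_congr rfl hdiag, ← LinearMap.sum_apply, hsq, LinearMap.zero_apply]

lemma sub_dh_single_apply_eq_zero {n k : ℕ} {x : ℕ →₀ M n} (hx : ∀ j < k, x j = 0)
    {y : M (n + 1)} (hy : D 0 n y = x k) : ∀ j < k + 1, (x - dh M N D n (single k y)) j = 0 := by
  intro j hj
  rw [Finsupp.sub_apply]
  rcases Nat.lt_or_ge j k with hjk | hjk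
  · rw [hx j hjk, dh_apply_of_lt (fun _ => single_apply_of_lt y) hjk, sub_zero]
  · obtain rfl : j = k := by omega
    rw [dh_apply_self (fun _ => single_apply_of_lt y), single_eq_same, hy, sub_self]

end

theorem stmt9
    -- `d₀` has no cohomology in negative degrees:
    (hexact : ∀ (n : ℕ) (x : M (n + 1)), D 0 n x = 0 → ∃ y : M (n + 2), D 0 (n + 1) y = x)
    -- `d_ℏ` is a finite sum `d₀ + ℏd₁ + … + ℏᴺd_N`:
    (hfin : ∀ j, N < j → ∀ n, D j n = 0)
    -- `d_ℏ² = 0`, componentwise in powers of `ℏ`: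
    (hsq : ∀ (k n : ℕ),
      ∑ i ∈ Finset.range (k + 1), (D i n) ∘ₗ (D (k - i) (n + 1)) = 0)
    (k : ℕ) :
    -- (a) injectivity of `H⁰(ℏ^{k+1}R_ℏ) → H⁰(ℏᵏR_ℏ)`:
    ((∀ p : ℕ →₀ M 0, (∀ j < k + 1, p j = 0) →
      (∃ q : ℕ →₀ M 1, (∀ j < k, q j = 0) ∧ dh M N D 0 q = p) →
      (∃ q' : ℕ →₀ M 1, (∀ j < k + 1, q' j = 0) ∧ dh M N D 0 q' = p)))
    ∧
    -- (b) the cokernel is `ℏᵏ H⁰(R•, d₀)`, via the leading coefficient `p ↦ p k`: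
    (∀ x : M 0, ∃ p : ℕ →₀ M 0, (∀ j < k, p j = 0) ∧ p k = x)
    ∧
    (∀ p : ℕ →₀ M 0, (∀ j < k, p j = 0) →
      ((∃ y : M 1, D 0 0 y = p k) ↔
        ∃ (p' : ℕ →₀ M 0) (q : ℕ →₀ M 1),
          (∀ j < k + 1, p' j = 0) ∧ (∀ j < k, q j = 0) ∧ p = p' + dh M N D 0 q))
    ∧
    -- (c) trivial associated graded of the cohomology in negative degrees:
    (∀ (n : ℕ) (p : ℕ →₀ M (n + 1)), (∀ j < k, p j = 0) → dh M N D n p = 0 →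
      ∃ (q : ℕ →₀ M (n + 2)) (p' : ℕ →₀ M (n + 1)),
        (∀ j < k, q j = 0) ∧ (∀ j < k + 1, p' j = 0) ∧
        p = dh M N D (n + 1) q + p') := by
  refine ⟨?_, fun x => ⟨Finsupp.single k x, fun _ => single_apply_of_lt x,
    Finsupp.single_eq_same⟩, fun p hp => ⟨?_, ?_⟩, ?_⟩
  · rintro p hp ⟨q, hq, rfl⟩
    obtain ⟨y, hy⟩ := hexact 0 (q k) (by rw [← dh_apply_self hq, hp k k.lt_succ_self])
    exact ⟨_, sub_dh_single_apply_eq_zero hq hy, by rw [map_sub, dh_dh hfin hsq, sub_zero]⟩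
  · rintro ⟨y, hy⟩
    exact ⟨_, Finsupp.single k y, sub_dh_single_apply_eq_zero hp hy,
      fun _ => single_apply_of_lt y, (sub_add_cancel _ _).symm⟩
  · rintro ⟨p', q, hp', hq, rfl⟩
    refine ⟨q k, ?_⟩
    rw [Finsupp.add_apply, hp' k k.lt_succ_self, dh_apply_self hq]
    exact (zero_add _).symm
  · intro n p hp hdp
    obtain ⟨y, hy⟩ := hexact n (p k) (by rw [← dh_apply_self hp, hdp]; rfl)
    exact ⟨Finsupp.single k y, _, fun _ => single_apply_of_lt y,
      sub_dh_single_apply_eq_zero hp hy, (add_sub_cancel _ _).symm⟩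

end
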